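/- Suppose F ⊆ ℕ is such that each column F_n is computable, and suppose there is a function f ≤_T ∅′ (i.e., f is limit computable: f(n) = lim_s g(n,s) for a computable g) such that f(n) is a characteristic index for F_n for every n (i.e., φ_{f(n)} is the characteristic function of F_n). Then there is a computable set F̂ ⊆ ℕ such that F̂_n =* F_n for every n (the symmetric difference of F̂_n and F_n is finite). Consequently, if F is maximal almost disjoint at the computable sets then no such limit computable f exists. -/

import Mathlib

/-- The `n`-th column of a set of naturals. -/
def column (F : Set ℕ) (n : ℕ) : Set ℕ := {x | Nat.pair x n ∈ F}

/-- The `e`-th partial computable function. -/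
def phi (e : ℕ) : ℕ →. ℕ := (Denumerable.ofNat Nat.Partrec.Code e).eval

/-!
Run `φ_{g(n,t)}` on `x` for `t` steps and search over stages `t ≥ x` until it halts. Once
`g(n, ·)` has settled on `f(n)`, any value found is `φ_{f(n)}(x)`, so for all sufficiently large
`x` the search returns the characteristic value of `F_n`: this gives a computable `F̂` with
`F̂_n =* F_n`.

Infinitude and almost disjointness of columns survive finite changes. For a computable family of
infinite, pairwise almost disjoint columns, choose `x₀ < x₁ < ⋯` with `x_{n+1}` outside the first
`n` columns; this is possible because `F̂_n` minus its finitely many points in earlier columns is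
infinite. The range of this computable increasing sequence is an infinite computable set that
meets every column finitely, so `F` cannot be maximal almost disjoint.
-/

open scoped symmDiff

namespace Set

variable {α : Type*} {s t s' t' : Set α}

theorem finite_iff_of_finite_symmDiff (h : (s ∆ t).Finite) : s.Finite ↔ t.Finite := by
  simpa only [← bot_eq_empty, symmDiff_bot] using h.symmDiff_congr (u := ⊥)

theorem finite_symmDiff_inter (hs : (s ∆ s').Finite) (ht : (t ∆ t').Finite) :
    ((s ∩ t) ∆ (s' ∩ t')).Finite :=
  (hs.union ht).subset fun x => by simp only [mem_symmDiff, mem_inter_iff, mem_union]; tauto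

theorem finite_symmDiff_of_eventually_atTop {s t : Set ℕ}
    (h : ∀ᶠ x in Filter.atTop, x ∈ s ↔ x ∈ t) : (s ∆ t).Finite := by
  rw [← Nat.cofinite_eq_atTop, Filter.eventually_cofinite] at h
  exact h.subset fun x => by simp only [mem_symmDiff, mem_ofPred_eq]; tauto

end Set

namespace ComputablePred

open Computable

variable {α β : Type*} [Primcodable α] [Primcodable β]

theorem comp {p : β → Prop} {f : α → β} (hp : ComputablePred p) (hf : Computable f) :
    ComputablePred fun a => p (f a) :=
  computable_of_manyOneReducible ⟨f, hf, fun _ => Iff.rfl⟩ hp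

theorem and {p q : α → Prop} (hp : ComputablePred p) (hq : ComputablePred q) :
    ComputablePred fun a => p a ∧ q a := by
  classical
  exact computable_iff.2 ⟨_, Primrec.and.to_comp.comp hp.decide hq.decide, by simp⟩

theorem forall_lt {p : α → ℕ → Prop} (hp : ComputablePred fun q : α × ℕ => p q.1 q.2) :
    ComputablePred fun q : α × ℕ => ∀ j < q.2, p q.1 j := by
  classical
  have hrec : Computable fun q : α × ℕ =>
      (Nat.rec true (fun j b => b && decide (p q.1 j)) q.2 : Bool) :=
    nat_rec snd (const true) <| Primrec.and.to_comp.comp (snd.comp snd)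
      (hp.decide.comp (pair (fst.comp fst) (fst.comp snd))) |>.to₂
  refine computable_iff.2 ⟨_, hrec, funext fun q => propext ?_⟩
  induction q.2 with
  | zero => simp
  | succ n ih => rw [Nat.forall_lt_succ_right, ih]; simp

theorem mem_range_of_strictMono {r : ℕ → ℕ} (hr : Computable r) (hmono : StrictMono r) :
    ComputablePred (· ∈ Set.range r) := by
  have hne : ComputablePred fun q : ℕ × ℕ => r q.2 ≠ q.1 :=
    (Primrec.eq.computablePred.comp (pair (hr.comp snd) fst)).not
  refine ((forall_lt (p := fun x n => r n ≠ x) hne).comp (pair Computable.id succ)).not.of_eq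
    fun x => ?_
  simp only [not_forall, not_not, Set.mem_range, Nat.lt_succ_iff]
  exact ⟨fun ⟨n, _, hn⟩ => ⟨n, hn⟩, fun ⟨n, hn⟩ => ⟨n, hn ▸ hmono.id_le n, hn⟩⟩

end ComputablePred

theorem Set.infinite_setOf_forall_lt_notMem {A : ℕ → Set ℕ} {n : ℕ} (hn : (A n).Infinite)
    (hdisj : ∀ j < n, (A n ∩ A j).Finite) : {x | ∀ j < n, x ∉ A j}.Infinite := by
  refine (hn.sdiff ((finite_lt_nat n).biUnion fun j hj => hdisj j hj)).mono ?_
  rintro x ⟨hx, hxj⟩ j hj hxA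
  exact hxj (mem_biUnion hj ⟨hx, hxA⟩)

section AvoidingSeq

open Set Classical Computable

noncomputable def avoidingSeq (A : ℕ → Set ℕ)
    (h : ∀ q : ℕ × ℕ, ∃ x, q.2 < x ∧ ∀ j < q.1, x ∉ A j) : ℕ → ℕ
  | 0 => 0
  | n + 1 => Nat.find (h (n, avoidingSeq A h n))

variable {A : ℕ → Set ℕ} (h : ∀ q : ℕ × ℕ, ∃ x, q.2 < x ∧ ∀ j < q.1, x ∉ A j)

theorem strictMono_avoidingSeq : StrictMono (avoidingSeq A h) :=
  strictMono_nat_of_lt_succ fun n => (Nat.find_spec (h (n, avoidingSeq A h n))).1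

theorem avoidingSeq_notMem {m n : ℕ} (hnm : n + 1 < m) : avoidingSeq A h m ∉ A n := by
  obtain ⟨k, rfl⟩ : ∃ k, m = k + 1 := ⟨m - 1, by omega⟩
  exact (Nat.find_spec (h (k, avoidingSeq A h k))).2 n (by omega)

theorem computable_avoidingSeq (hA : ComputablePred fun q : ℕ × ℕ => q.2 ∈ A q.1) :
    Computable (avoidingSeq A h) := by
  have hfresh : ComputablePred fun p : (ℕ × ℕ) × ℕ => p.1.2 < p.2 ∧ ∀ j < p.1.1, p.2 ∉ A j :=
    (Primrec.nat_lt.computablePred.comp (pair (snd.comp fst) snd)).and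
      ((ComputablePred.forall_lt (p := fun x j => x ∉ A j) (hA.not.comp (pair snd fst))).comp
        (pair snd (fst.comp fst)))
  have hstep : Computable fun q : ℕ × ℕ => Nat.find (h q) := Computable.find hfresh h
  refine (nat_rec Computable.id (const 0) (hstep.comp snd).to₂).of_eq fun n => ?_
  induction n with
  | zero => rfl
  | succ n ih => simp only [id, avoidingSeq] at ih ⊢; simp only [← ih]

theorem exists_computable_infinite_forall_inter_finite
    (hA : ComputablePred fun q : ℕ × ℕ => q.2 ∈ A q.1) (hinf : ∀ n, (A n).Infinite)
    (hdisj : ∀ n k, n ≠ k → (A n ∩ A k).Finite) :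
    ∃ R : Set ℕ, ComputablePred (· ∈ R) ∧ R.Infinite ∧ ∀ n, (R ∩ A n).Finite := by
  have h : ∀ q : ℕ × ℕ, ∃ x, q.2 < x ∧ ∀ j < q.1, x ∉ A j := fun q =>
    ((infinite_setOf_forall_lt_notMem (hinf q.1) fun j hj => hdisj _ _ hj.ne').exists_gt q.2).imp
      fun _ hx => ⟨hx.2, hx.1⟩
  have hmono := strictMono_avoidingSeq h
  refine ⟨range (avoidingSeq A h),
    ComputablePred.mem_range_of_strictMono (computable_avoidingSeq h hA) hmono,
    infinite_range_of_injective hmono.injective,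
    fun n => ((finite_Iic (n + 1)).image (avoidingSeq A h)).subset ?_⟩
  rintro _ ⟨⟨m, rfl⟩, hm⟩
  exact ⟨m, not_lt.1 fun hnm => avoidingSeq_notMem h hnm hm, rfl⟩

end AvoidingSeq

section LimitEvaluation

open Nat.Partrec (Code)
open Nat.Partrec.Code Filter Computable

def stageEval (g : ℕ → ℕ → ℕ) (n x s : ℕ) : Option ℕ :=
  evaln (s + x) (Denumerable.ofNat Code (g n (s + x))) x

theorem computable_stageEval {g : ℕ → ℕ → ℕ} (hg : Computable₂ g) :
    Computable₂ fun q : ℕ × ℕ => stageEval g q.1 q.2 := by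
  have hstage : Computable fun p : (ℕ × ℕ) × ℕ => p.2 + p.1.2 :=
    Primrec.nat_add.to_comp.comp snd (snd.comp fst)
  have hcode : Computable fun p : (ℕ × ℕ) × ℕ =>
      Denumerable.ofNat Code (g p.1.1 (p.2 + p.1.2)) :=
    (Computable.ofNat Code).comp (hg.comp (fst.comp fst) hstage)
  exact (primrec_evaln.to_comp.comp ((hstage.pair hcode).pair (snd.comp fst))).to₂

variable {f : ℕ → ℕ} {g : ℕ → ℕ → ℕ}

theorem exists_mem_stageEval {n : ℕ} (hlim : ∀ᶠ s in atTop, g n s = f n) {v x : ℕ}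
    (hv : v ∈ phi (f n) x) : ∃ s, v ∈ stageEval g n x s := by
  obtain ⟨s₀, hs₀⟩ := eventually_atTop.1 hlim
  obtain ⟨k, hk⟩ := evaln_complete.1 hv
  refine ⟨max k s₀, ?_⟩
  rw [stageEval, hs₀ _ (by omega)]
  exact evaln_mono (by omega) hk

theorem mem_phi_of_mem_stageEval {n s₀ : ℕ} (hs₀ : ∀ t ≥ s₀, g n t = f n) {v x s : ℕ}
    (hx : s₀ ≤ x) (hv : v ∈ stageEval g n x s) : v ∈ phi (f n) x := by
  rw [stageEval, hs₀ _ (by omega)] at hv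
  exact evaln_sound hv

theorem exists_computable_eventually_mem_phi (hg : Computable₂ g)
    (hlim : ∀ n, ∀ᶠ s in atTop, g n s = f n) (htot : ∀ n x, (phi (f n) x).Dom) :
    ∃ h : ℕ → ℕ → ℕ, Computable₂ h ∧ ∀ n, ∀ᶠ x in atTop, h n x ∈ phi (f n) x := by
  have hdom : ∀ q : ℕ × ℕ, (Nat.rfindOpt (stageEval g q.1 q.2)).Dom := fun q =>
    Nat.rfindOpt_dom.2 <| (exists_mem_stageEval (hlim q.1) (Part.get_mem (htot q.1 q.2))).imp
      fun _ hv => ⟨_, hv⟩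
  refine ⟨fun n x => (Nat.rfindOpt (stageEval g n x)).get (hdom (n, x)),
    ((Partrec.rfindOpt (computable_stageEval hg)).of_eq_tot fun q => Part.get_mem (hdom q)).to₂,
    fun n => ?_⟩
  obtain ⟨s₀, hs₀⟩ := eventually_atTop.1 (hlim n)
  filter_upwards [eventually_ge_atTop s₀] with x hx
  obtain ⟨s, hs⟩ := Nat.rfindOpt_spec (Part.get_mem (hdom (n, x)))
  exact mem_phi_of_mem_stageEval hs₀ hx hs

end LimitEvaluation

open Classical Computable in
theorem exists_computable_finite_symmDiff_column {F : Set ℕ} {f : ℕ → ℕ} {g : ℕ → ℕ → ℕ}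
    (hg : Computable₂ g) (hlim : ∀ n, ∀ᶠ s in Filter.atTop, g n s = f n)
    (hchar : ∀ n x, phi (f n) x = Part.some (if x ∈ column F n then 1 else 0)) :
    ∃ Fhat : Set ℕ, ComputablePred (· ∈ Fhat) ∧ ∀ n, (column Fhat n ∆ column F n).Finite := by
  obtain ⟨h, hh, hev⟩ := exists_computable_eventually_mem_phi hg hlim fun n x => by simp [hchar]
  refine ⟨{m | h m.unpair.2 m.unpair.1 = 1}, ?_,
    fun n => Set.finite_symmDiff_of_eventually_atTop ?_⟩
  · exact Primrec.eq.computablePred.comp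
      (pair (hh.comp (snd.comp Primrec.unpair.to_comp) (fst.comp Primrec.unpair.to_comp)) (const 1))
  · filter_upwards [hev n] with x hx
    rw [hchar, Part.mem_some_iff] at hx
    change h (Nat.pair x n).unpair.2 (Nat.pair x n).unpair.1 = 1 ↔ x ∈ column F n
    rw [Nat.unpair_pair, hx]
    split_ifs <;> simpa

open Classical in
/-- If each column `F_n` of `F` is computable and a limit-computable function `f`
gives a characteristic index for `F_n` uniformly in `n`, then there is a computable
set `F̂` whose columns agree with those of `F` up to finite difference.  Consequently,
if `F` is maximal almost disjoint at the computable sets then no such `f` exists. -/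
theorem no_delta2_indices_for_MAD (F : Set ℕ) (f : ℕ → ℕ) (g : ℕ → ℕ → ℕ)
    (hg : Computable₂ g)
    (hlim : ∀ n, ∀ᶠ s in Filter.atTop, g n s = f n)
    (hchar : ∀ n x, phi (f n) x = Part.some (if x ∈ column F n then 1 else 0)) :
    (∃ Fhat : Set ℕ, ComputablePred (· ∈ Fhat) ∧
      ∀ n, (symmDiff (column Fhat n) (column F n)).Finite) ∧
    (((∀ n, (column F n).Infinite) ∧
      (∀ n k, n ≠ k → (column F n ∩ column F k).Finite) ∧
      (∀ R : Set ℕ, ComputablePred (· ∈ R) → R.Infinite →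
        ∃ n, (R ∩ column F n).Infinite)) → False) := by
  obtain ⟨Fhat, hFhat, hclose⟩ := exists_computable_finite_symmDiff_column hg hlim hchar
  refine ⟨⟨Fhat, hFhat, hclose⟩, fun ⟨hinf, hdisj, hmad⟩ => ?_⟩
  have hcols : ComputablePred fun q : ℕ × ℕ => q.2 ∈ column Fhat q.1 :=
    hFhat.comp (Primrec₂.natPair.to_comp.comp Computable.snd Computable.fst)
  obtain ⟨R, hR, hRinf, hRfin⟩ := exists_computable_infinite_forall_inter_finite hcols
    (fun n => (Set.finite_iff_of_finite_symmDiff (hclose n)).not.2 (hinf n))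
    (fun n k hnk => (Set.finite_iff_of_finite_symmDiff
      (Set.finite_symmDiff_inter (hclose n) (hclose k))).2 (hdisj n k hnk))
  obtain ⟨n, hn⟩ := hmad R hR hRinf
  exact hn ((Set.finite_iff_of_finite_symmDiff
    (Set.finite_symmDiff_inter (by simp) (hclose n))).1 (hRfin n))
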